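/- arXiv:1401.7619 — 3 statements merged into one kernel-verified Lean document; each statement's English description precedes it below -/
import Mathlib

section
/- Let H and Q be Hilbert spaces, A : H × H → ℝ and B : H × Q → ℝ bounded bilinear forms, and V = {v ∈ H : B(v,μ) = 0 for all μ ∈ Q}. If A is coercive on V (A(v,v) ≥ α‖v‖² for all v ∈ V) and B satisfies the inf-sup condition sup_{v ≠ 0} B(v,μ)/‖v‖_H ≥ c‖μ‖_Q for all μ ∈ Q with c > 0, then for all bounded linear functionals F on H and G on Q there exists a unique pair (u,λ) ∈ H × Q with A(u,v) + B(v,λ) = F(v) for all v ∈ H and B(u,μ) = G(μ) for all μ ∈ Q. -/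
/-!
Write `B v μ = ⟪b v, μ⟫` with an operator `b : H → Q`. The inf-sup condition says precisely
that the adjoint is bounded below, `c ‖μ‖ ≤ ‖b† μ‖`. Then `b b†` is coercive, so `b` is onto by
Lax–Milgram, and `b†` has closed range, namely `(ker b)ᗮ`. Choose `u₁` with `b u₁ = g`, correct it
by the solution `u₀ ∈ ker b` of the problem for `A` restricted to `ker b` (coercive there), and the
residual `F - A (u₁ + u₀)`, which vanishes on `ker b`, is `⟪b ·, λ⟫` for some `λ`. For uniqueness,
a solution of the homogeneous problem has `u ∈ ker b` and `A u u = -⟪b u, λ⟫ = 0`, so `u = 0`, and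
then `b† λ = 0` forces `λ = 0`.
-/

open InnerProductSpace RealInnerProductSpace ContinuousLinearMap
open scoped InnerProduct

namespace ContinuousLinearMap

variable {E F : Type*} [NormedAddCommGroup E] [InnerProductSpace ℝ E]
  [NormedAddCommGroup F] [InnerProductSpace ℝ F] [CompleteSpace F]

noncomputable def rieszRight (T : E →L[ℝ] F →L[ℝ] ℝ) : E →L[ℝ] F :=
  (toDual ℝ F).symm.toContinuousLinearEquiv.toContinuousLinearMap.comp T

@[simp]
theorem inner_rieszRight_apply (T : E →L[ℝ] F →L[ℝ] ℝ) (u : E) (w : F) :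
    ⟪T.rieszRight u, w⟫_ℝ = T u w := by
  simp [rieszRight]

variable [CompleteSpace E]

theorem sSup_inner_div_norm_le_norm_adjoint (T : E →L[ℝ] F) (y : F) :
    sSup {r : ℝ | ∃ x : E, x ≠ 0 ∧ r = ⟪T x, y⟫_ℝ / ‖x‖} ≤ ‖(T†) y‖ := by
  refine Real.sSup_le ?_ (norm_nonneg _)
  rintro _ ⟨x, hx, rfl⟩
  rw [div_le_iff₀ (norm_pos_iff.2 hx), ← adjoint_inner_right, real_inner_comm]
  exact real_inner_le_norm _ _

variable {T : E →L[ℝ] F} {c : ℝ}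

theorem isCoercive_innerSL_comp_adjoint (hc : 0 < c) (hT : ∀ y, c * ‖y‖ ≤ ‖(T†) y‖) :
    IsCoercive (innerSL ℝ ∘L (T ∘L T†)) := by
  refine ⟨c ^ 2, by positivity, fun y => ?_⟩
  calc c ^ 2 * ‖y‖ * ‖y‖ = (c * ‖y‖) ^ 2 := by ring
    _ ≤ ‖(T†) y‖ ^ 2 := pow_le_pow_left₀ (by positivity) (hT y) 2
    _ = (innerSL ℝ ∘L (T ∘L T†)) y y := by
      rw [← real_inner_self_eq_norm_sq, adjoint_inner_right]; rfl

theorem surjective_of_adjoint_bounded_below (hc : 0 < c) (hT : ∀ y, c * ‖y‖ ≤ ‖(T†) y‖) :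
    Function.Surjective T := by
  have hcoercive := isCoercive_innerSL_comp_adjoint hc hT
  intro g
  obtain ⟨μ, rfl⟩ := hcoercive.continuousLinearEquivOfBilin.surjective g
  exact ⟨(T†) μ, ext_inner_right ℝ fun w => (hcoercive.continuousLinearEquivOfBilin_apply μ w).symm⟩

theorem range_adjoint_eq_orthogonal_ker (hc : 0 < c) (hT : ∀ y, c * ‖y‖ ≤ ‖(T†) y‖) :
    (T†).range = T.kerᗮ := by
  have hclosed : IsClosed ((T†).range : Set E) := by
    refine ((T†).antilipschitz_of_bound (K := ⟨c⁻¹, by positivity⟩) fun y => ?_).isClosed_range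
      (T†).uniformContinuous
    change ‖y‖ ≤ c⁻¹ * ‖(T†) y‖
    rw [inv_mul_eq_div, le_div_iff₀' hc]
    exact hT y
  rw [T.orthogonal_ker, hclosed.submodule_topologicalClosure_eq]

end ContinuousLinearMap

theorem exists_mem_forall_mem_apply_eq_of_coercive_on {H : Type*} [NormedAddCommGroup H]
    [InnerProductSpace ℝ H] (a : H →L[ℝ] H →L[ℝ] ℝ) (V : Submodule ℝ H) [CompleteSpace V]
    {α : ℝ} (hα : 0 < α) (ha : ∀ v ∈ V, α * ‖v‖ ^ 2 ≤ a v v) (ℓ : H →L[ℝ] ℝ) :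
    ∃ u ∈ V, ∀ w ∈ V, a u w = ℓ w := by
  have hcoercive : IsCoercive (a.bilinearComp V.subtypeL V.subtypeL) :=
    ⟨α, hα, fun v => by simpa [sq, mul_assoc] using ha v v.2⟩
  set L := hcoercive.continuousLinearEquivOfBilin
  set u := L.symm ((toDual ℝ V).symm (ℓ ∘L V.subtypeL))
  refine ⟨u, u.2, fun w hw => ?_⟩
  simpa [u, L] using (hcoercive.continuousLinearEquivOfBilin_apply u ⟨w, hw⟩).symm

section SaddlePoint

variable {H Q : Type*} [NormedAddCommGroup H] [InnerProductSpace ℝ H] [CompleteSpace H]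
  [NormedAddCommGroup Q] [InnerProductSpace ℝ Q] [CompleteSpace Q]
  {a : H →L[ℝ] H →L[ℝ] ℝ} {b : H →L[ℝ] Q} {α c : ℝ}

theorem eq_zero_of_saddlePoint_homogeneous (hα : 0 < α)
    (ha : ∀ v ∈ b.ker, α * ‖v‖ ^ 2 ≤ a v v) (hc : 0 < c) (hb : ∀ μ, c * ‖μ‖ ≤ ‖(b†) μ‖)
    {u : H} {q : Q} (h₁ : ∀ v, a u v + ⟪b v, q⟫_ℝ = 0) (h₂ : b u = 0) : u = 0 ∧ q = 0 := by
  have hu : u = 0 := by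
    have h := ha u h₂
    rw [eq_neg_of_add_eq_zero_left (h₁ u), h₂, inner_zero_left, neg_zero] at h
    by_contra hne
    linarith [mul_pos hα (pow_pos (norm_pos_iff.2 hne) 2)]
  have hq : (b†) q = 0 := ext_inner_right ℝ fun v => by
    rw [adjoint_inner_left, real_inner_comm, inner_zero_left, eq_neg_of_add_eq_zero_right (h₁ v),
      hu, map_zero, zero_apply, neg_zero]
  have h := hb q
  rw [hq, norm_zero] at h
  exact ⟨hu, norm_le_zero_iff.1 (nonpos_of_mul_nonpos_right h hc)⟩

theorem existsUnique_saddlePoint (hα : 0 < α) (ha : ∀ v ∈ b.ker, α * ‖v‖ ^ 2 ≤ a v v)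
    (hc : 0 < c) (hb : ∀ μ, c * ‖μ‖ ≤ ‖(b†) μ‖) (f : H →L[ℝ] ℝ) (g : Q) :
    ∃! p : H × Q, (∀ v, a p.1 v + ⟪b v, p.2⟫_ℝ = f v) ∧ b p.1 = g := by
  have : CompleteSpace b.ker := b.isClosed_ker.completeSpace_coe
  obtain ⟨u₁, rfl⟩ := surjective_of_adjoint_bounded_below hc hb g
  obtain ⟨u₀, hu₀, hu₀a⟩ := exists_mem_forall_mem_apply_eq_of_coercive_on a b.ker hα ha (f - a u₁)
  have hbu₀ : b u₀ = 0 := hu₀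
  set u := u₁ + u₀
  have hres : (toDual ℝ H).symm (f - a u) ∈ b.kerᗮ := fun w hw => by
    rw [real_inner_comm, toDual_symm_apply]
    simp [u, hu₀a w hw]
  obtain ⟨q, hq⟩ : ∃ q, (b†) q = (toDual ℝ H).symm (f - a u) :=
    (range_adjoint_eq_orthogonal_ker hc hb).ge hres
  have hsol : ∀ v, a u v + ⟪b v, q⟫_ℝ = f v := fun v => by
    rw [real_inner_comm, ← adjoint_inner_left, hq, toDual_symm_apply, sub_apply, add_sub_cancel]
  refine ⟨(u, q), ⟨hsol, by simp [u, hbu₀]⟩, fun ⟨u', q'⟩ ⟨h₁, h₂⟩ => ?_⟩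
  obtain ⟨hu', hq'⟩ := eq_zero_of_saddlePoint_homogeneous (u := u' - u) (q := q' - q) hα ha hc hb
    (fun v => by simp only [map_sub, sub_apply, inner_sub_right]; linarith [h₁ v, hsol v])
    (by simp [h₂, u, hbu₀])
  exact Prod.ext (sub_eq_zero.1 hu') (sub_eq_zero.1 hq')

end SaddlePoint

/-- Babuska–Brezzi saddle-point theorem. -/
theorem babuska_brezzi (H Q : Type*)
    [NormedAddCommGroup H] [InnerProductSpace ℝ H] [CompleteSpace H]
    [NormedAddCommGroup Q] [InnerProductSpace ℝ Q] [CompleteSpace Q]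
    (A : H →ₗ[ℝ] H →ₗ[ℝ] ℝ) (B : H →ₗ[ℝ] Q →ₗ[ℝ] ℝ)
    (CA CB : ℝ)
    (hAbound : ∀ u v : H, |A u v| ≤ CA * ‖u‖ * ‖v‖)
    (hBbound : ∀ (v : H) (μ : Q), |B v μ| ≤ CB * ‖v‖ * ‖μ‖)
    (α : ℝ) (hα : 0 < α)
    (hcoercive : ∀ v : H, (∀ μ : Q, B v μ = 0) → α * ‖v‖ ^ 2 ≤ A v v)
    (c : ℝ) (hc : 0 < c)
    (hinfsup : ∀ μ : Q, c * ‖μ‖ ≤ sSup {r : ℝ | ∃ v : H, v ≠ 0 ∧ r = B v μ / ‖v‖})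
    (F : H →L[ℝ] ℝ) (G : Q →L[ℝ] ℝ) :
    ∃! p : H × Q,
      (∀ v : H, A p.1 v + B v p.2 = F v) ∧ (∀ μ : Q, B p.1 μ = G μ) := by
  let a := A.mkContinuous₂ CA (by simpa using hAbound)
  let b := (B.mkContinuous₂ CB (by simpa using hBbound)).rieszRight
  have hB : ∀ v μ, B v μ = ⟪b v, μ⟫_ℝ := fun v μ =>
    (inner_rieszRight_apply (B.mkContinuous₂ CB _) v μ).symm
  have hker : ∀ v ∈ b.ker, ∀ μ, B v μ = 0 := fun v hv μ => by
    rw [hB, show b v = 0 from hv, inner_zero_left]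
  have hG : ∀ u, (∀ μ, ⟪b u, μ⟫_ℝ = G μ) ↔ b u = (toDual ℝ Q).symm G := fun u => by
    simp [LinearIsometryEquiv.eq_symm_apply, ContinuousLinearMap.ext_iff]
  simp only [hB] at hinfsup
  simp only [hB, hG]
  exact existsUnique_saddlePoint (a := a) hα (fun v hv => hcoercive v (hker v hv)) hc
    (fun μ => (hinfsup μ).trans (b.sSup_inner_div_norm_le_norm_adjoint μ)) F ((toDual ℝ Q).symm G)
end

section
/- (Céa's lemma) Under the hypotheses of Lax–Milgram with continuity constant α and coercivity constant β, if u solves the variational problem in V and u_h solves it in a subspace V_h, then ‖u - u_h‖ ≤ (α/β) inf_{v_h ∈ V_h} ‖u - v_h‖. -/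
section Cea

variable {V : Type*} [SeminormedAddCommGroup V] [Module ℝ V] {A : V →ₗ[ℝ] V →ₗ[ℝ] ℝ} {α β : ℝ}

/-- With `e = u - u_h` and `d = u - v_h`, the hypothesis `A e e = A e d` is Galerkin
orthogonality tested against `v_h - u_h`. -/
theorem mul_norm_le_of_coercive_of_apply_self_eq (hα : 0 ≤ α)
    (hbound : ∀ u v : V, |A u v| ≤ α * ‖u‖ * ‖v‖)
    (hcoercive : ∀ v : V, β * ‖v‖ ^ 2 ≤ A v v) {e d : V} (h : A e e = A e d) :
    β * ‖e‖ ≤ α * ‖d‖ := by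
  have hsq : β * ‖e‖ * ‖e‖ ≤ α * ‖d‖ * ‖e‖ :=
    calc β * ‖e‖ * ‖e‖ = β * ‖e‖ ^ 2 := by ring
      _ ≤ A e d := h ▸ hcoercive e
      _ ≤ |A e d| := le_abs_self _
      _ ≤ α * ‖e‖ * ‖d‖ := hbound e d
      _ = α * ‖d‖ * ‖e‖ := by ring
  rcases (norm_nonneg e).eq_or_lt with he | he
  · rw [← he, mul_zero]
    positivity
  · exact le_of_mul_le_mul_right hsq he

end Cea

theorem cea_lemma_general (V : Type*) [NormedAddCommGroup V] [InnerProductSpace ℝ V]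
    (A : V →ₗ[ℝ] V →ₗ[ℝ] ℝ) (α β : ℝ) (hα : 0 < α) (hβ : 0 < β)
    (hbound : ∀ u v : V, |A u v| ≤ α * ‖u‖ * ‖v‖)
    (hcoercive : ∀ v : V, β * ‖v‖ ^ 2 ≤ A v v)
    (F : V →L[ℝ] ℝ) (Vh : Submodule ℝ V)
    (u : V) (hu : ∀ v : V, A u v = F v)
    (uh : V) (huh : uh ∈ Vh) (huhs : ∀ vh ∈ Vh, A uh vh = F vh) :
    ‖u - uh‖ ≤ (α / β) * ⨅ vh : Vh, ‖u - (vh : V)‖ := by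
  have horth (vh : Vh) : A (u - uh) (u - uh) = A (u - uh) (u - vh) := by
    have hw : (vh : V) - uh ∈ Vh := Vh.sub_mem vh.2 huh
    have : A (u - uh) ((vh : V) - uh) = 0 := by
      rw [LinearMap.map_sub₂, hu, huhs _ hw, sub_self]
    rw [← sub_eq_zero, ← map_sub, sub_sub_sub_cancel_left, this]
  have hquasi (vh : Vh) : ‖u - uh‖ ≤ α / β * ‖u - vh‖ := by
    rw [div_mul_eq_mul_div, le_div_iff₀ hβ, mul_comm]
    exact mul_norm_le_of_coercive_of_apply_self_eq hα.le hbound hcoercive (horth vh)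
  rw [Real.mul_iInf_of_nonneg (by positivity)]
  exact le_ciInf hquasi

/-- Céa's lemma: the Galerkin approximation is quasi-optimal,
`‖u - u_h‖ ≤ (α/β) · inf_{v_h ∈ V_h} ‖u - v_h‖`. -/
theorem cea_lemma (V : Type*) [NormedAddCommGroup V] [InnerProductSpace ℝ V]
    [CompleteSpace V] (A : V →ₗ[ℝ] V →ₗ[ℝ] ℝ) (α β : ℝ) (hα : 0 < α) (hβ : 0 < β)
    (hbound : ∀ u v : V, |A u v| ≤ α * ‖u‖ * ‖v‖)
    (hcoercive : ∀ v : V, β * ‖v‖ ^ 2 ≤ A v v)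
    (F : V →L[ℝ] ℝ) (Vh : Submodule ℝ V)
    (u : V) (hu : ∀ v : V, A u v = F v)
    (uh : V) (huh : uh ∈ Vh) (huhs : ∀ vh ∈ Vh, A uh vh = F vh) :
    ‖u - uh‖ ≤ (α / β) * ⨅ vh : Vh, ‖u - (vh : V)‖ :=
  cea_lemma_general V A α β hα hβ hbound hcoercive F Vh u hu uh huh huhs
end

section
/- A polynomial of total degree at most 2 on a nondegenerate triangle is uniquely determined by its values at the three vertices and the three edge midpoints: if p has total degree ≤ 2 and vanishes at all three vertices a¹, a², a³ and all three midpoints a^{ij} = (aⁱ + aʲ)/2 of a triangle with affinely independent vertices, then p ≡ 0. -/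
/-!
Write `p = c + ℓ + q` with `ℓ` linear and `q` a quadratic form. For any two points `x, y`,
`2 p(x) + 2 p(y) - 4 p((x + y)/2) = q(y - x)`, so the six nodes force `q` to vanish on the three
edge vectors `u = a² - a¹`, `v = a³ - a¹` and `v - u`. Since `u, v` form a basis, `q` vanishes
on `u`, `v` and polarizes to zero on `(u, v)`, hence `q = 0`; then `ℓ` vanishes on `u, v`, so
`ℓ = 0`, and finally `c = p(a¹) = 0`.
-/

open MvPolynomial

section Quadratic

variable {R : Type*} [CommSemiring R]

def quadratic (c : ℕ → ℕ → R) (x : Fin 2 → R) : R :=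
  c 0 0 + c 1 0 * x 0 + c 0 1 * x 1 + c 2 0 * x 0 ^ 2 + c 1 1 * (x 0 * x 1) + c 0 2 * x 1 ^ 2

def quadraticPart (c : ℕ → ℕ → R) (x : Fin 2 → R) : R :=
  c 2 0 * x 0 ^ 2 + c 1 1 * (x 0 * x 1) + c 0 2 * x 1 ^ 2

end Quadratic

section Nodes

variable {K : Type*} [Field K]

theorem quadraticPart_sub [Invertible (2 : K)] (c : ℕ → ℕ → K) (x y : Fin 2 → K) :
    quadraticPart c (y - x) =
      2 * quadratic c x + 2 * quadratic c y - 4 * quadratic c (midpoint K x y) := by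
  simp only [quadratic, quadraticPart, midpoint_eq_smul_add, invOf_eq_inv, Pi.smul_apply,
    Pi.add_apply, Pi.sub_apply, smul_eq_mul]
  field_simp
  ring

theorem quadraticPart_sub_eq_zero [Invertible (2 : K)] {c : ℕ → ℕ → K} {x y : Fin 2 → K}
    (hx : quadratic c x = 0) (hy : quadratic c y = 0) (hxy : quadratic c (midpoint K x y) = 0) :
    quadraticPart c (y - x) = 0 := by
  rw [quadraticPart_sub, hx, hy, hxy]
  ring

theorem quadraticPart_coeffs_eq_zero {c : ℕ → ℕ → K} {u v : Fin 2 → K}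
    (hdet : u 0 * v 1 - u 1 * v 0 ≠ 0) (hu : quadraticPart c u = 0) (hv : quadraticPart c v = 0)
    (huv : quadraticPart c (v - u) = 0) : c 2 0 = 0 ∧ c 1 1 = 0 ∧ c 0 2 = 0 := by
  simp only [quadraticPart, Pi.sub_apply] at hu hv huv
  refine ⟨?_, ?_, ?_⟩ <;> refine (mul_eq_zero.mp ?_).resolve_right (pow_ne_zero 2 hdet)
  · linear_combination (v 1 ^ 2 - u 1 * v 1) * hu + (u 1 ^ 2 - u 1 * v 1) * hv + u 1 * v 1 * huv
  · linear_combination (-2 * v 0 * v 1 + u 1 * v 0 + u 0 * v 1) * hu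
      + (-2 * u 0 * u 1 + u 1 * v 0 + u 0 * v 1) * hv - (u 1 * v 0 + u 0 * v 1) * huv
  · linear_combination (v 0 ^ 2 - u 0 * v 0) * hu + (u 0 ^ 2 - u 0 * v 0) * hv + u 0 * v 0 * huv

theorem linear_coeffs_eq_zero {c₀ c₁ : K} {u v : Fin 2 → K}
    (hdet : u 0 * v 1 - u 1 * v 0 ≠ 0) (hu : c₀ * u 0 + c₁ * u 1 = 0)
    (hv : c₀ * v 0 + c₁ * v 1 = 0) : c₀ = 0 ∧ c₁ = 0 := by
  refine ⟨?_, ?_⟩ <;> refine (mul_eq_zero.mp ?_).resolve_right hdet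
  · linear_combination v 1 * hu - u 1 * hv
  · linear_combination u 0 * hv - v 0 * hu

theorem quadratic_eq_zero_of_vanishes_on_nodes [Invertible (2 : K)] {c : ℕ → ℕ → K}
    {a : Fin 3 → Fin 2 → K}
    (hdet : (a 1 - a 0) 0 * (a 2 - a 0) 1 - (a 1 - a 0) 1 * (a 2 - a 0) 0 ≠ 0)
    (hvert : ∀ i, quadratic c (a i) = 0)
    (hmid : ∀ i j, i ≠ j → quadratic c (midpoint K (a i) (a j)) = 0) :
    quadratic c = 0 := by
  have hedge (i j : Fin 3) (hij : i ≠ j) : quadraticPart c (a j - a i) = 0 :=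
    quadraticPart_sub_eq_zero (hvert i) (hvert j) (hmid i j hij)
  obtain ⟨h20, h11, h02⟩ := quadraticPart_coeffs_eq_zero hdet (hedge 0 1 (by decide))
    (hedge 0 2 (by decide)) (by simpa using hedge 1 2 (by decide))
  have hvert_affine (i : Fin 3) : c 0 0 + c 1 0 * a i 0 + c 0 1 * a i 1 = 0 := by
    simpa [quadratic, h20, h11, h02] using hvert i
  obtain ⟨h10, h01⟩ := linear_coeffs_eq_zero (c₀ := c 1 0) (c₁ := c 0 1) hdet
    (by simp only [Pi.sub_apply]; linear_combination hvert_affine 1 - hvert_affine 0)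
    (by simp only [Pi.sub_apply]; linear_combination hvert_affine 2 - hvert_affine 0)
  have h00 : c 0 0 = 0 := by simpa [h10, h01] using hvert_affine 0
  funext x
  simp [quadratic, h00, h10, h01, h20, h11, h02]

theorem det_ne_zero_of_affineIndependent {a : Fin 3 → Fin 2 → K} (ha : AffineIndependent K a) :
    (a 1 - a 0) 0 * (a 2 - a 0) 1 - (a 1 - a 0) 1 * (a 2 - a 0) 0 ≠ 0 := by
  rw [affineIndependent_iff_linearIndependent_vsub K a 0] at ha
  have hrows : LinearIndependent K (Matrix.of ![a 1 - a 0, a 2 - a 0]).row := by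
    have : (Matrix.of ![a 1 - a 0, a 2 - a 0]).row =
        (fun i : {x // x ≠ 0} => a i -ᵥ a 0) ∘ finSuccAboveEquiv (0 : Fin 3) := by
      ext i k; fin_cases i <;> rfl
    exact this ▸ ha.comp _ (Equiv.injective _)
  have := (Matrix.isUnit_iff_isUnit_det _).mp (Matrix.linearIndependent_rows_iff_isUnit.mp hrows)
  simpa [Matrix.det_fin_two] using this.ne_zero

end Nodes

section Bivariate

noncomputable def biExp (i j : ℕ) : Fin 2 →₀ ℕ := Finsupp.single 0 i + Finsupp.single 1 j

@[simp] theorem biExp_inj {i j k l : ℕ} : biExp i j = biExp k l ↔ i = k ∧ j = l := by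
  refine ⟨fun h => ⟨?_, ?_⟩, fun ⟨hik, hjl⟩ => hik ▸ hjl ▸ rfl⟩
  · simpa [biExp] using DFunLike.congr_fun h 0
  · simpa [biExp] using DFunLike.congr_fun h 1

theorem biExp_apply_self (m : Fin 2 →₀ ℕ) : biExp (m 0) (m 1) = m := by
  ext k; fin_cases k <;> simp [biExp]

variable {R : Type*} [CommSemiring R]

theorem prod_pow_biExp (x : Fin 2 → R) (i j : ℕ) : ∏ k, x k ^ biExp i j k = x 0 ^ i * x 1 ^ j := by
  simp [biExp, Fin.prod_univ_two]

variable {p : MvPolynomial (Fin 2) R}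

theorem support_subset_of_totalDegree_le_two (hdeg : p.totalDegree ≤ 2) :
    p.support ⊆ {biExp 0 0, biExp 1 0, biExp 0 1, biExp 2 0, biExp 1 1, biExp 0 2} := by
  intro m hm
  have hm2 : m 0 + m 1 ≤ 2 := by
    have := (le_totalDegree hm).trans hdeg
    rwa [Finsupp.sum_fintype _ _ (fun _ => rfl), Fin.sum_univ_two] at this
  rw [← biExp_apply_self m]
  have : m 0 ≤ 2 := by omega
  have : m 1 ≤ 2 := by omega
  interval_cases m 0 <;> interval_cases m 1 <;> simp_all

theorem eval_eq_quadratic (hdeg : p.totalDegree ≤ 2) (x : Fin 2 → R) :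
    eval x p = quadratic (fun i j => coeff (biExp i j) p) x := by
  rw [eval_eq', Finset.sum_subset (support_subset_of_totalDegree_le_two hdeg)
    fun m _ hm => by rw [notMem_support_iff.mp hm, zero_mul]]
  simp (disch := simp) only [Finset.sum_insert, Finset.sum_singleton]
  simp only [prod_pow_biExp, quadratic]
  ring

end Bivariate

/-- A polynomial of total degree at most 2 vanishing at the three vertices and
the three edge midpoints of a nondegenerate triangle vanishes identically. -/
theorem quadratic_determined_by_p2_nodes (p : MvPolynomial (Fin 2) ℝ)
    (hdeg : p.totalDegree ≤ 2) (a : Fin 3 → (Fin 2 → ℝ))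
    (hindep : AffineIndependent ℝ a)
    (hvert : ∀ i, eval (a i) p = 0)
    (hmid : ∀ i j, i ≠ j → eval (midpoint ℝ (a i) (a j)) p = 0) :
    p = 0 := by
  simp only [eval_eq_quadratic hdeg] at hvert hmid
  have hq := quadratic_eq_zero_of_vanishes_on_nodes
    (det_ne_zero_of_affineIndependent hindep) hvert hmid
  exact MvPolynomial.funext fun x => by rw [eval_eq_quadratic hdeg, hq, Pi.zero_apply, map_zero]
end
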